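/- In the Witt ring W(Z/4Z), four times the class of the rank-one form ⟨-1⟩ equals the class of the rank-two form ω with matrix ((2,1),(1,2)); explicitly, the orthogonal sum ⟨-1⟩⊕⟨-1⟩⊕⟨-1⟩⊕⟨-1⟩ is isometric to ω⊕⟨-1⟩⊕⟨1⟩. -/

import Mathlib

open Matrix

namespace WittZ4

/-- A nondegenerate symmetric bilinear form on a finitely generated free
`Z/4Z`-module, presented by its Gram matrix. -/
structure QF where
  m : ℕ
  G : Matrix (Fin m) (Fin m) (ZMod 4)
  symm : G.IsSymm
  nondeg : IsUnit G.det

/-- Isometry of forms: an invertible change of basis carrying one Gram matrix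
to the other. -/
def Isometric (a b : QF) : Prop :=
  ∃ h : a.m = b.m, ∃ P : Matrix (Fin b.m) (Fin b.m) (ZMod 4), IsUnit P.det ∧
    Pᵀ * (Matrix.reindex (finCongr h) (finCongr h) a.G) * P = b.G

/-- Orthogonal (block-diagonal) sum of forms. -/
def orthSum (a b : QF) : QF where
  m := a.m + b.m
  G := Matrix.reindex finSumFinEquiv finSumFinEquiv (Matrix.fromBlocks a.G 0 0 b.G)
  symm := by
    simp [Matrix.IsSymm, Matrix.transpose_reindex, Matrix.fromBlocks_transpose,
      a.symm.eq, b.symm.eq]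
  nondeg := by
    rw [Matrix.det_reindex_self, Matrix.det_fromBlocks_zero₂₁]
    exact a.nondeg.mul b.nondeg

end WittZ4

namespace WittZ4

/-- The bilinear pairing associated to a form. -/
def pair (a : QF) (x y : Fin a.m → ZMod 4) : ZMod 4 :=
  dotProduct x (a.G.mulVec y)

/-- The orthogonal complement of a submodule with respect to a form. -/
def orthCompl (a : QF) (N : Submodule (ZMod 4) (Fin a.m → ZMod 4)) :
    Submodule (ZMod 4) (Fin a.m → ZMod 4) where
  carrier := {x | ∀ y ∈ N, pair a x y = 0}
  zero_mem' := by intro y hy; simp [pair]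
  add_mem' := by
    intro x z hx hz y hy
    have h1 : pair a x y = 0 := hx y hy
    have h2 : pair a z y = 0 := hz y hy
    simp only [pair] at h1 h2
    simp [pair, add_dotProduct, h1, h2]
  smul_mem' := by
    intro c x hx y hy
    have h1 : pair a x y = 0 := hx y hy
    simp only [pair] at h1
    simp [pair, smul_dotProduct, h1]

/-- A form is split if the underlying module contains a direct summand `N`
with `N = N^⊥`. -/
def IsSplit (a : QF) : Prop :=
  ∃ N : Submodule (ZMod 4) (Fin a.m → ZMod 4),
    (∃ N', IsCompl N N') ∧ N = orthCompl a N

/-- Witt equivalence: two forms represent the same class in the Witt ring iff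
they become isometric after adding split forms. -/
def WittEquiv (a b : QF) : Prop :=
  ∃ s t : QF, IsSplit s ∧ IsSplit t ∧ Isometric (orthSum a s) (orthSum b t)

/-- The zero form (on the zero module). -/
def zeroForm : QF :=
  ⟨0, 1, Matrix.isSymm_one, by simp⟩

/-- The rank-one form `⟨1⟩`. -/
def oneForm : QF :=
  ⟨1, Matrix.of fun _ _ => (1 : ZMod 4), by ext i j; rfl,
    by simp [Matrix.det_fin_one]⟩

/-- The rank-one form `⟨-1⟩`. -/
def negOneForm : QF :=
  ⟨1, Matrix.of fun _ _ => (-1 : ZMod 4), by ext i j; rfl,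
    by simp [Matrix.det_fin_one]⟩

/-- The rank-two form `ω` with Gram matrix `((2,1),(1,2))`. -/
def omegaForm : QF :=
  ⟨2, !![2, 1; 1, 2], by decide,
    IsUnit.of_mul_eq_one 3 (by decide)⟩

/-- `j` orthogonal copies of a form. -/
def copies : ℕ → QF → QF
  | 0, _ => zeroForm
  | j + 1, a => orthSum (copies j a) a

end WittZ4

namespace WittZ4

/-!
Over `Z/4Z` the vectors `e₁ + e₂` and `3e₂ + e₃` of `⟨-1⟩⁴` have norm `2` and pair to `1`, so
they span a copy of `ω`; its orthogonal complement is spanned by `2e₁ + 2e₂ + 2e₃ + e₄` and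
`e₁ + 3e₂ + 3e₃ + 2e₄`, of norms `-1` and `1`. Since `⟨-1⟩ ⊕ ⟨1⟩` is split (the vector `(1, 1)`
spans a Lagrangian), `4⟨-1⟩` and `ω` differ by a split form.
-/

theorem Isometric.trans {a b c : QF} (hab : Isometric a b) (hbc : Isometric b c) :
    Isometric a c := by
  obtain ⟨h₁, P, hP, hPB⟩ := hab
  obtain ⟨h₂, Q, hQ, hQC⟩ := hbc
  cases a; cases b; cases c
  dsimp only at h₁ h₂ P Q hPB hQC ⊢
  subst h₁ h₂
  refine ⟨rfl, P * Q, by simpa [det_mul] using hP.mul hQ, ?_⟩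
  simp only [finCongr_refl, reindex_refl_refl] at hPB hQC ⊢
  simp only [← hQC, ← hPB, transpose_mul, Matrix.mul_assoc]

theorem isometric_of_cast_eq {a b : QF} (h : a.m = b.m)
    (hG : ∀ i j, a.G i j = b.G (Fin.cast h i) (Fin.cast h j)) : Isometric a b := by
  refine ⟨h, 1, by simp, ?_⟩
  ext i j
  simpa using hG (Fin.cast h.symm i) (Fin.cast h.symm j)

-- `simp` and `rw` do not see through indices of type `Fin (orthSum a b).m`, so the proofs below
-- first restate Gram matrices of orthogonal sums over `Fin (m + n)` (or `Fin 2`) with `show`.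
theorem isometric_orthSum_zeroForm (a : QF) : Isometric (orthSum a zeroForm) a :=
  isometric_of_cast_eq (add_zero a.m) fun i j => by
    change Fin a.m at i j
    show reindex finSumFinEquiv finSumFinEquiv
        (fromBlocks a.G 0 0 (1 : Matrix (Fin 0) (Fin 0) (ZMod 4))) (Fin.castAdd 0 i)
        (Fin.castAdd 0 j) = a.G i j
    simp only [reindex_apply, submatrix_apply, finSumFinEquiv_symm_apply_castAdd,
      fromBlocks_apply₁₁]

theorem isometric_orthSum_assoc (a b c : QF) :
    Isometric (orthSum (orthSum a b) c) (orthSum a (orthSum b c)) := by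
  have hleft (i : Fin a.m) :
      Fin.cast (Nat.add_assoc a.m b.m c.m) (Fin.castAdd c.m (Fin.castAdd b.m i)) =
        Fin.castAdd (b.m + c.m) i := rfl
  have hmid (i : Fin b.m) :
      Fin.cast (Nat.add_assoc a.m b.m c.m) (Fin.castAdd c.m (Fin.natAdd a.m i)) =
        Fin.natAdd a.m (Fin.castAdd c.m i) := rfl
  have hright (i : Fin c.m) :
      Fin.cast (Nat.add_assoc a.m b.m c.m) (Fin.natAdd (a.m + b.m) i) =
        Fin.natAdd a.m (Fin.natAdd b.m i) := Fin.ext (Nat.add_assoc ..)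
  refine isometric_of_cast_eq (Nat.add_assoc a.m b.m c.m) fun i j => ?_
  change Fin (a.m + b.m + c.m) at i j
  show reindex finSumFinEquiv finSumFinEquiv
      (fromBlocks (reindex finSumFinEquiv finSumFinEquiv (fromBlocks a.G 0 0 b.G)) 0 0 c.G) i j =
    reindex finSumFinEquiv finSumFinEquiv
      (fromBlocks a.G 0 0 (reindex finSumFinEquiv finSumFinEquiv (fromBlocks b.G 0 0 c.G)))
      (Fin.cast (Nat.add_assoc a.m b.m c.m) i) (Fin.cast (Nat.add_assoc a.m b.m c.m) j)
  induction i using Fin.addCases with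
  | left i => induction i using Fin.addCases <;> induction j using Fin.addCases with
    | left j => induction j using Fin.addCases <;> simp [hleft, hmid]
    | right j => simp [hleft, hmid, hright]
  | right i => induction j using Fin.addCases with
    | left j => induction j using Fin.addCases <;> simp [hleft, hmid, hright]
    | right j => simp [hright]

def rankOne (u : (ZMod 4)ˣ) : QF :=
  ⟨1, Matrix.of fun _ _ => (u : ZMod 4), by ext i j; rfl, by simp⟩

theorem pair_orthSum_rankOne (u v : (ZMod 4)ˣ) (x y : Fin 2 → ZMod 4) :
    pair (orthSum (rankOne u) (rankOne v)) x y = u * x 0 * y 0 + v * x 1 * y 1 := by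
  have hG (i j : Fin 2) :
      (orthSum (rankOne u) (rankOne v)).G i j = !![(u : ZMod 4), 0; 0, v] i j := by
    fin_cases i <;> fin_cases j <;> rfl
  show ∑ i : Fin 2, x i * ∑ j : Fin 2, (orthSum (rankOne u) (rankOne v)).G i j * y j = _
  simp only [hG, Fin.sum_univ_two, of_apply, cons_val', cons_val_zero, cons_val_fin_one,
    cons_val_one, zero_mul, add_zero, zero_add]
  ring

theorem isSplit_orthSum_rankOne_neg (u : (ZMod 4)ˣ) :
    IsSplit (orthSum (rankOne (-u)) (rankOne u)) := by
  have hpair := pair_orthSum_rankOne (-u) u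
  show ∃ N : Submodule (ZMod 4) (Fin 2 → ZMod 4), (∃ N', IsCompl N N') ∧
    N = orthCompl (orthSum (rankOne (-u)) (rankOne u)) N
  refine ⟨(ZMod 4) ∙ 1, ⟨(ZMod 4) ∙ Pi.single 0 1, ⟨?_, ?_⟩⟩, ?_⟩
  · rw [Submodule.disjoint_def]
    intro x hx hx'
    obtain ⟨a, rfl⟩ := Submodule.mem_span_singleton.mp hx
    obtain ⟨b, hb⟩ := Submodule.mem_span_singleton.mp hx'
    have ha : a = 0 := by simpa using (congrFun hb 1).symm
    simp [ha]
  · rw [codisjoint_iff, eq_top_iff]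
    intro x _
    refine Submodule.mem_sup.mpr ⟨x 1 • 1, Submodule.mem_span_singleton.mpr ⟨x 1, rfl⟩,
      (x 0 - x 1) • Pi.single 0 1, Submodule.mem_span_singleton.mpr ⟨x 0 - x 1, rfl⟩, ?_⟩
    ext i
    fin_cases i <;> simp
  · ext x
    change _ ↔ ∀ y ∈ (ZMod 4) ∙ (1 : Fin 2 → ZMod 4),
      pair (orthSum (rankOne (-u)) (rankOne u)) x y = 0
    rw [Submodule.mem_span_singleton]
    constructor
    · rintro ⟨a, rfl⟩ y hy
      obtain ⟨b, rfl⟩ := Submodule.mem_span_singleton.mp hy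
      refine (hpair (a • 1) (b • 1)).trans ?_
      simp only [Pi.smul_apply, Pi.one_apply, smul_eq_mul, Units.val_neg]
      ring
    · intro hx
      have h := (hpair x 1).symm.trans (hx 1 (Submodule.mem_span_singleton_self 1))
      simp only [Units.val_neg, Pi.one_apply, mul_one] at h
      have hx01 : x 1 = x 0 :=
        sub_eq_zero.mp <| (Units.mul_right_eq_zero u).mp (by linear_combination h)
      refine ⟨x 0, ?_⟩
      ext i
      fin_cases i <;> simp [hx01]

theorem isSplit_zeroForm : IsSplit zeroForm :=
  ⟨⊤, ⟨⊥, isCompl_top_bot⟩, @Subsingleton.elim (Submodule (ZMod 4) (Fin 0 → ZMod 4)) _ _ _⟩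

theorem WittEquiv.of_isometric_orthSum {a b t : QF} (h : Isometric a (orthSum b t))
    (ht : IsSplit t) : WittEquiv a b :=
  ⟨zeroForm, t, isSplit_zeroForm, ht, (isometric_orthSum_zeroForm a).trans h⟩

-- The columns of the change-of-basis matrix are the basis vectors named in the header.
theorem isometric_copies_four_negOneForm :
    Isometric (copies 4 negOneForm) (orthSum (orthSum omegaForm negOneForm) oneForm) :=
  ⟨rfl, !![1, 0, 2, 1; 1, 3, 2, 3; 0, 1, 2, 3; 0, 0, 1, 2],
    IsUnit.of_mul_eq_one 1 (by decide), by decide⟩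

/-- In `W(Z/4Z)`, `4⟨-1⟩ = [ω]`: explicitly, `⟨-1⟩⊕⟨-1⟩⊕⟨-1⟩⊕⟨-1⟩` is isometric
to `ω⊕⟨-1⟩⊕⟨1⟩`, and hence `copies 4 ⟨-1⟩` is Witt equivalent to `ω`. -/
theorem four_negOne_eq_omega :
    Isometric (copies 4 negOneForm) (orthSum (orthSum omegaForm negOneForm) oneForm) ∧
    WittEquiv (copies 4 negOneForm) omegaForm :=
  ⟨isometric_copies_four_negOneForm,
    .of_isometric_orthSum (isometric_copies_four_negOneForm.trans (isometric_orthSum_assoc _ _ _))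
      (isSplit_orthSum_rankOne_neg 1)⟩

end WittZ4
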